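/- Fix d ≥ 1 and ρ > 0. (i) If θ : [0,1] → ℝ^d satisfies sup_{t∈[0,1]} |θ(t)| ≤ (Σ_{i=1}^d ρ^{−2i})^{−1/2}, then θ ∈ S(ρ). (ii) If θ ∈ S(ρ), then sup_{t∈[0,1]} |θ(t)| ≤ (1+ρ)^d − 1. Here |·| is the Euclidean norm on ℝ^d. -/

import Mathlib

open MeasureTheory ProbabilityTheory Finset
open scoped ENNReal NNReal Real

noncomputable section

/-- Euclidean norm on `Fin d → ℝ`. -/
def vnorm {d : ℕ} (x : Fin d → ℝ) : ℝ := Real.sqrt (∑ i, x i ^ 2)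

/-- Operator norm (induced by the Euclidean norms) of a real matrix. -/
def opNorm {d e : ℕ} (A : Matrix (Fin d) (Fin e) ℝ) : ℝ :=
  sSup {r : ℝ | ∃ x : Fin e → ℝ, vnorm x ≤ 1 ∧ r = vnorm (A.mulVec x)}

/-- Backwards matrix product `A k * A (k-1) * ⋯ * A (j+1)` (identity if `k ≤ j`). -/
def matProdDown {d : ℕ} (A : ℕ → Matrix (Fin d) (Fin d) ℝ) (j : ℕ) :
    ℕ → Matrix (Fin d) (Fin d) ℝ
  | 0 => 1
  | (k+1) => if k + 1 ≤ j then 1 else A (k+1) * matProdDown A j k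

/-- The stability class `S(ρ)`: the local autoregressive polynomial
`θ(z;t) = 1 - ∑_{j=1}^d θ_j(t) z^j` has no zero in the open disk of radius `ρ⁻¹`,
for every `t ∈ [0,1]`. -/
def srho (d : ℕ) (ρ : ℝ) : Set (ℝ → Fin d → ℝ) :=
  {θ | ∀ t ∈ Set.Icc (0:ℝ) 1, ∀ z : ℂ, ‖z‖ < ρ⁻¹ →
        (1 : ℂ) - ∑ j : Fin d, (θ t j : ℂ) * z ^ ((j : ℕ) + 1) ≠ 0}

/-- The `β`-Lipschitz (Hölder) ball `Λ_d(β, L)` (on `[0,1]`), vector-valued version.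
Writing `β = k + α` with `k ∈ ℕ` and `α ∈ (0,1]` (so `k = ⌈β⌉ - 1`), the `k`-th derivative
is `α`-Hölder with constant `L` and the function is bounded by `L` on `[0,1]`. -/
def holderVec (d : ℕ) (β L : ℝ) : Set (ℝ → Fin d → ℝ) :=
  {f | (∀ i < ⌈β⌉₊ - 1, Differentiable ℝ (iteratedDeriv i f)) ∧
       (∀ s ∈ Set.Icc (0:ℝ) 1, ∀ t ∈ Set.Icc (0:ℝ) 1,
          vnorm (iteratedDeriv (⌈β⌉₊ - 1) f t - iteratedDeriv (⌈β⌉₊ - 1) f s)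
            ≤ L * |t - s| ^ (β - ((⌈β⌉₊ - 1 : ℕ) : ℝ))) ∧
       (∀ t ∈ Set.Icc (0:ℝ) 1, vnorm (f t) ≤ L)}

/-- The `β`-Lipschitz (Hölder) ball `Λ₁(β, L)` (on `[0,1]`), scalar version. -/
def holderR (β L : ℝ) : Set (ℝ → ℝ) :=
  {f | (∀ i < ⌈β⌉₊ - 1, Differentiable ℝ (iteratedDeriv i f)) ∧
       (∀ s ∈ Set.Icc (0:ℝ) 1, ∀ t ∈ Set.Icc (0:ℝ) 1,
          |iteratedDeriv (⌈β⌉₊ - 1) f t - iteratedDeriv (⌈β⌉₊ - 1) f s|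
            ≤ L * |t - s| ^ (β - ((⌈β⌉₊ - 1 : ℕ) : ℝ))) ∧
       (∀ t ∈ Set.Icc (0:ℝ) 1, |f t| ≤ L)}

/-- The smoothness class `C(β, L, ρ, σ₋, σ₊)`. -/
def Cclass (d : ℕ) (β L ρ σlo σhi : ℝ) : Set ((ℝ → Fin d → ℝ) × (ℝ → ℝ)) :=
  {P | P.1 ∈ holderVec d β L ∧ P.1 ∈ srho d ρ ∧
       ∀ t ∈ Set.Icc (0:ℝ) 1, P.2 t ∈ Set.Icc σlo σhi}

/-- The smoothness class `C*(β, L, ρ, σ₋, σ₊)`, where moreover `σ ∈ Λ₁(β, σ₊)`. -/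
def CclassStar (d : ℕ) (β L ρ σlo σhi : ℝ) : Set ((ℝ → Fin d → ℝ) × (ℝ → ℝ)) :=
  {P | P ∈ Cclass d β L ρ σlo σhi ∧ P.2 ∈ holderR β σhi}

/-- The data of a TVAR triangular array: innovations `ε n k` (`1 ≤ k ≤ n`) and
initial vectors `X0 n = X_{0,n}` on a probability space `Ω`. -/
structure TVAR (d : ℕ) (Ω : Type) [MeasureSpace Ω] where
  ε : ℕ → ℕ → Ω → ℝ
  X0 : ℕ → Ω → Fin d → ℝ

namespace TVAR

variable {d : ℕ} {Ω : Type} [MeasureSpace Ω]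

/-- The TVAR state vector process `X_{k,n} = (X_{k,n}, …, X_{k-d+1,n})` driven by the
parameters `(θ, σ)`:
`X_{k,n} = ∑_{i=1}^d θ_i((k-1)/n) X_{k-i,n} + σ(k/n) ε_{k,n}`. -/
def Xvec (M : TVAR d Ω) (θ : ℝ → Fin d → ℝ) (σ : ℝ → ℝ) (n : ℕ) : ℕ → Ω → Fin d → ℝ
  | 0 => M.X0 n
  | (k+1) => fun ω i =>
      if (i : ℕ) = 0 then
        (∑ j, θ ((k : ℝ) / n) j * M.Xvec θ σ n k ω j)
          + σ (((k : ℝ) + 1) / n) * M.ε n (k+1) ω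
      else M.Xvec θ σ n k ω ⟨(i : ℕ) - 1, lt_of_le_of_lt (Nat.sub_le _ _) i.isLt⟩

/-- The scalar observation `X_{k,n}`. -/
def Xs (M : TVAR d Ω) [NeZero d] (θ : ℝ → Fin d → ℝ) (σ : ℝ → ℝ) (n k : ℕ) (ω : Ω) : ℝ :=
  M.Xvec θ σ n k ω ⟨0, Nat.pos_of_ne_zero (NeZero.ne d)⟩

end TVAR

/-- Assumption (A1) with moment order `q`: for each `n` the innovations `{ε_{k,n}}_{1≤k≤n}`
are independent, centered with unit variance, independent of the initial condition `X_{0,n}`,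
and the `q`-th moments of `X_{0,n}` and of the innovations are uniformly bounded. -/
def A1 {d : ℕ} {Ω : Type} [MeasureSpace Ω] (M : TVAR d Ω) (q : ℝ) : Prop :=
  IsProbabilityMeasure (ℙ : Measure Ω) ∧
  (∀ n k, Measurable (M.ε n k)) ∧
  (∀ n, Measurable (M.X0 n)) ∧
  (∀ n : ℕ, 1 ≤ n →
    iIndepFun
      (fun (k : Fin n) ω => M.ε n ((k : ℕ) + 1) ω) ℙ) ∧
  (∀ n : ℕ, 1 ≤ n → IndepFun (M.X0 n) (fun ω (k : Fin n) => M.ε n ((k : ℕ) + 1) ω) ℙ) ∧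
  (∀ n k : ℕ, 1 ≤ k → k ≤ n → Integrable (M.ε n k) ℙ ∧ ∫ ω, M.ε n k ω ∂ℙ = 0) ∧
  (∀ n k : ℕ, 1 ≤ k → k ≤ n →
    Integrable (fun ω => (M.ε n k ω) ^ 2) ℙ ∧ ∫ ω, (M.ε n k ω) ^ 2 ∂ℙ = 1) ∧
  (∃ K : ℝ, ∀ n : ℕ, 1 ≤ n →
    (∫⁻ ω, ENNReal.ofReal (vnorm (M.X0 n ω) ^ q) ∂ℙ) ≤ ENNReal.ofReal K) ∧
  (∃ K : ℝ, ∀ n k : ℕ, 1 ≤ k → k ≤ n →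
    (∫⁻ ω, ENNReal.ofReal (|M.ε n k ω| ^ q) ∂ℙ) ≤ ENNReal.ofReal K)

/-- Assumption (A2): each innovation `ε_{k,n}` has an absolutely continuous density
`p_{k,n}` (with a.e. derivative `ṗ_{k,n}`) w.r.t. Lebesgue measure, with
`E[ṗ/p(ε)] = 0` and `sup E[(ṗ/p(ε))²] < ∞`. -/
def A2 {d : ℕ} {Ω : Type} [MeasureSpace Ω] (M : TVAR d Ω) : Prop :=
  ∃ pdf dpdf : ℕ → ℕ → ℝ → ℝ, ∃ Iε : ℝ,
    ∀ n k : ℕ, 1 ≤ k → k ≤ n →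
      (∀ x, 0 ≤ pdf n k x) ∧ Measurable (pdf n k) ∧
      (Measure.map (M.ε n k) ℙ
        = (volume : Measure ℝ).withDensity (fun x => ENNReal.ofReal (pdf n k x))) ∧
      (∀ x y : ℝ, pdf n k y - pdf n k x = ∫ u in x..y, dpdf n k u) ∧
      (∫ ω, dpdf n k (M.ε n k ω) / pdf n k (M.ε n k ω) ∂ℙ = 0) ∧
      (∫ ω, (dpdf n k (M.ε n k ω) / pdf n k (M.ε n k ω)) ^ 2 ∂ℙ ≤ Iε)

namespace TVAR

variable {d : ℕ} {Ω : Type} [MeasureSpace Ω]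

/-- The NLMS recursive estimator `θ̂_{k,n}(μ)`. -/
def nlms (M : TVAR d Ω) [NeZero d] (θ : ℝ → Fin d → ℝ) (σ : ℝ → ℝ) (μ : ℝ) (n : ℕ) :
    ℕ → Ω → Fin d → ℝ
  | 0 => fun _ _ => 0
  | (k+1) => fun ω i =>
      M.nlms θ σ μ n k ω i +
        μ * (M.Xs θ σ n (k+1) ω - ∑ j, M.nlms θ σ μ n k ω j * M.Xvec θ σ n k ω j)
          * M.Xvec θ σ n k ω i / (1 + μ * vnorm (M.Xvec θ σ n k ω) ^ 2)

/-- The pointwise NLMS estimator `θ̂_n(t; μ) = θ̂_{⌊tn⌋,n}(μ)`. -/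
def est (M : TVAR d Ω) [NeZero d] (θ : ℝ → Fin d → ℝ) (σ : ℝ → ℝ) (μ : ℝ) (n : ℕ)
    (t : ℝ) : Ω → Fin d → ℝ :=
  M.nlms θ σ μ n ⌊t * n⌋₊

/-- The bias-reduced (two step-sizes) estimator `θ̃_n(t; μ, γ)`. -/
def estR (M : TVAR d Ω) [NeZero d] (θ : ℝ → Fin d → ℝ) (σ : ℝ → ℝ) (μ γ : ℝ) (n : ℕ)
    (t : ℝ) (ω : Ω) : Fin d → ℝ :=
  fun i => (1 - γ)⁻¹ * (M.est θ σ μ n t ω i - γ * M.est θ σ (γ * μ) n t ω i)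

/-- The σ-algebra `F_{k,n} = σ(X_{0,n}, X_{1,n}, …, X_{k,n})`. -/
def filt (M : TVAR d Ω) [NeZero d] (θ : ℝ → Fin d → ℝ) (σ : ℝ → ℝ) (n k : ℕ) :
    MeasurableSpace Ω :=
  MeasurableSpace.comap (M.X0 n) inferInstance ⊔
    ⨆ j ∈ Set.Icc 1 k, MeasurableSpace.comap (M.Xs θ σ n j) inferInstance

end TVAR

/-- `L^p` norm (w.r.t. the Euclidean norm) of a vector–valued random variable. -/
def pnormVec {d : ℕ} {Ω : Type} [MeasureSpace Ω] (p : ℝ) (Z : Ω → Fin d → ℝ) : ℝ :=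
  (∫ ω, vnorm (Z ω) ^ p ∂ℙ) ^ (1 / p)

/-- `L^p` norm (w.r.t. the operator norm) of a matrix–valued random variable. -/
def pnormMat {d : ℕ} {Ω : Type} [MeasureSpace Ω] (p : ℝ)
    (Z : Ω → Matrix (Fin d) (Fin d) ℝ) : ℝ :=
  (∫ ω, opNorm (Z ω) ^ p ∂ℙ) ^ (1 / p)

/-- `L^p` norm of a real random variable. -/
def pnormR {Ω : Type} [MeasureSpace Ω] (p : ℝ) (Z : Ω → ℝ) : ℝ :=
  (∫ ω, |Z ω| ^ p ∂ℙ) ^ (1 / p)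

/-- Entrywise expectation of a random matrix. -/
def expMat {d : ℕ} {Ω : Type} [MeasureSpace Ω] (Z : Ω → Matrix (Fin d) (Fin d) ℝ) :
    Matrix (Fin d) (Fin d) ℝ :=
  Matrix.of fun i j => ∫ ω, Z ω i j ∂ℙ

/-- `F_μ(x) = x xᵀ / (1 + μ |x|²)`. -/
def Fmu {d : ℕ} (μ : ℝ) (x : Fin d → ℝ) : Matrix (Fin d) (Fin d) ℝ :=
  Matrix.of fun i j => x i * x j / (1 + μ * vnorm x ^ 2)

/-- `L_μ(x) = x / (1 + μ |x|²)`. -/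
def Lmu {d : ℕ} (μ : ℝ) (x : Fin d → ℝ) : Fin d → ℝ :=
  fun i => x i / (1 + μ * vnorm x ^ 2)

namespace TVAR

variable {d : ℕ} {Ω : Type} [MeasureSpace Ω]

/-- The random matrix product `Ψ_n(k, j; μ) = ∏_{l=j+1}^{k} (I - μ F_μ(X_{l,n}))`. -/
def Psi (M : TVAR d Ω) (θ : ℝ → Fin d → ℝ) (σ : ℝ → ℝ) (μ : ℝ) (n k j : ℕ) (ω : Ω) :
    Matrix (Fin d) (Fin d) ℝ :=
  matProdDown (fun l => 1 - μ • Fmu μ (M.Xvec θ σ n l ω)) j k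

end TVAR

/-- The local covariance matrix `Σ(t, θ, σ)`, with entries
`∫_{-π}^{π} e^{iλ(k-l)} f(λ; t, θ, σ) dλ` where `f` is the local spectral density
`f(λ; t, θ, σ) = σ²(t)/(2π) |θ(e^{iλ}; t)|^{-2}` (the integral is real since `f` is even). -/
def locCov (d : ℕ) (θ : ℝ → Fin d → ℝ) (σ : ℝ → ℝ) (t : ℝ) : Matrix (Fin d) (Fin d) ℝ :=
  Matrix.of fun k l => ∫ lam in (-π)..π,
    Real.cos (lam * (((k : ℕ) : ℝ) - ((l : ℕ) : ℝ))) *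
      (σ t ^ 2 / (2 * π) *
        ((‖(1 : ℂ) - ∑ j : Fin d,
          (θ t j : ℂ) * Complex.exp (Complex.I * (((j : ℕ) : ℝ) + 1) * lam)‖) ^ 2)⁻¹)

/-- The `α`-fractional power of a symmetric (positive-definite) matrix, through its
spectral decomposition (junk value `0` if the matrix is not Hermitian). -/
def matFracPow {d : ℕ} (A : Matrix (Fin d) (Fin d) ℝ) (α : ℝ) : Matrix (Fin d) (Fin d) ℝ :=
  if h : A.IsHermitian then h.cfc (fun x => x ^ α) else 0

/-- The smallest eigenvalue of a symmetric matrix (as the infimum of the Rayleigh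
quotient over the Euclidean unit sphere). -/
def lamMin {d : ℕ} (A : Matrix (Fin d) (Fin d) ℝ) : ℝ :=
  sInf {r : ℝ | ∃ x : Fin d → ℝ, vnorm x = 1 ∧ r = dotProduct x (A.mulVec x)}

/-- The weighted Lipschitz bound defining `Li(ℝ^d, m, ℝ; p)`: `φ` satisfies both (23) and
(24) with constant `lam`. -/
def LiBound {d m : ℕ} (p : ℝ) (φ : (Fin m → (Fin d → ℝ)) → ℝ) (lam : ℝ) : Prop :=
  (∀ x y : Fin m → Fin d → ℝ,
      |φ x - φ y| ≤ lam * (∑ i, vnorm (x i - y i)) *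
        (1 + ∑ i, vnorm (x i) ^ p + ∑ i, vnorm (y i) ^ p)) ∧
  (∀ x : Fin m → Fin d → ℝ, |φ x| ≤ lam * (1 + ∑ i, vnorm (x i) ^ (p + 1)))

/-- The weighted Lipschitz bound for `m = 1`, i.e. `Li(ℝ^d, 1, ℝ; p)`. -/
def LiBound1 {d : ℕ} (p : ℝ) (φ : (Fin d → ℝ) → ℝ) (lam : ℝ) : Prop :=
  (∀ x y : Fin d → ℝ,
      |φ x - φ y| ≤ lam * vnorm (x - y) * (1 + vnorm x ^ p + vnorm y ^ p)) ∧
  (∀ x : Fin d → ℝ, |φ x| ≤ lam * (1 + vnorm x ^ (p + 1)))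

/-- The `d × d` companion matrix `Θ(t, θ)` of the local autoregressive polynomial. -/
def companion {d : ℕ} (v : Fin d → ℝ) : Matrix (Fin d) (Fin d) ℝ :=
  Matrix.of fun i j => if (i : ℕ) = 0 then v j else if (j : ℕ) + 1 = (i : ℕ) then 1 else 0

/-- The filtration `F_k = σ(Z_0, U_1, …, U_k)` generated by an initial condition and
the first `k` innovations. -/
def natFilt {Ω : Type} [MeasureSpace Ω] {d e : ℕ} (Z0 : Ω → Fin d → ℝ)
    (U : ℕ → Ω → Fin e → ℝ) (k : ℕ) : MeasurableSpace Ω :=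
  MeasurableSpace.comap Z0 inferInstance ⊔
    ⨆ i ∈ Set.Icc 1 k, MeasurableSpace.comap (U i) inferInstance

/-- A vector of `Fin d → ℝ` regarded as a point of Euclidean space. -/
def toEuc {d : ℕ} (x : Fin d → ℝ) : EuclideanSpace ℝ (Fin d) :=
  (WithLp.equiv 2 (Fin d → ℝ)).symm x

/-- The `L^p` norm (`p ∈ [1,∞]`, w.r.t. the Euclidean norm) of a vector-valued random
variable, as an extended nonnegative real. -/
def pnormE {Ω : Type} [MeasureSpace Ω] {d : ℕ} (p : ℝ≥0∞) (Z : Ω → Fin d → ℝ) : ℝ≥0∞ :=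
  eLpNorm (fun ω => toEuc (Z ω)) p ℙ

end

/-!
(i) By Cauchy–Schwarz, `|∑ θ_j z^{j+1}| ≤ |θ| (∑ |z|^{2(j+1)})^{1/2}`, and for `|z| < ρ⁻¹` the
last factor is strictly below `(∑ ρ^{-2(j+1)})^{1/2}`, so the sum has modulus `< 1`.

(ii) The reciprocal polynomial `z^d θ(1/z)` is monic of degree `d` and all its roots lie in the
closed disc of radius `ρ`. By Vieta, `θ_j` is up to sign the `(j+1)`-th elementary symmetric
function of these roots, so `|θ_j| ≤ C(d, j+1) ρ^{j+1}`; summing,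
`|θ| ≤ ∑ |θ_j| ≤ (1 + ρ)^d - 1`.
-/

open Polynomial

theorem norm_sum_ofReal_mul_le {d : ℕ} (x : Fin d → ℝ) (w : Fin d → ℂ) :
    ‖∑ j, (x j : ℂ) * w j‖ ≤ vnorm x * √(∑ j, ‖w j‖ ^ 2) :=
  calc ‖∑ j, (x j : ℂ) * w j‖ ≤ ∑ j, |x j| * ‖w j‖ := by
        simpa using norm_sum_le Finset.univ fun j => (x j : ℂ) * w j
    _ ≤ √(∑ j, |x j| ^ 2) * √(∑ j, ‖w j‖ ^ 2) := Real.sum_mul_le_sqrt_mul_sqrt _ _ _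
    _ = vnorm x * √(∑ j, ‖w j‖ ^ 2) := by simp [vnorm, sq_abs]

theorem one_sub_sum_ne_zero_of_vnorm_le {d : ℕ} (x : Fin d → ℝ) {ρ : ℝ}
    (hx : vnorm x ≤ (√(∑ i ∈ Finset.range d, (ρ ^ (2 * (i + 1)))⁻¹))⁻¹) {z : ℂ}
    (hz : ‖z‖ < ρ⁻¹) : 1 - ∑ j, (x j : ℂ) * z ^ ((j : ℕ) + 1) ≠ 0 := by
  rcases isEmpty_or_nonempty (Fin d) with _ | _
  · simp
  set B := ∑ i ∈ Finset.range d, (ρ ^ (2 * (i + 1)))⁻¹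
  set B' := ∑ j : Fin d, ‖z ^ ((j : ℕ) + 1)‖ ^ 2
  have hB' : B' < B := by
    rw [show B = ∑ j : Fin d, (ρ ^ (2 * ((j : ℕ) + 1)))⁻¹ from
      (Fin.sum_univ_eq_sum_range (fun i => (ρ ^ (2 * (i + 1)))⁻¹) d).symm]
    refine Finset.sum_lt_sum_of_nonempty Finset.univ_nonempty fun j _ => ?_
    rw [norm_pow, ← pow_mul, mul_comm, ← inv_pow]
    exact pow_lt_pow_left₀ hz (norm_nonneg z) (by omega)
  have hB : 0 < B := (by positivity : 0 ≤ B').trans_lt hB'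
  have hsum : ‖∑ j, (x j : ℂ) * z ^ ((j : ℕ) + 1)‖ < 1 :=
    calc ‖∑ j, (x j : ℂ) * z ^ ((j : ℕ) + 1)‖ ≤ vnorm x * √B' := norm_sum_ofReal_mul_le x _
      _ ≤ (√B)⁻¹ * √B' := by gcongr
      _ < (√B)⁻¹ * √B := by gcongr
      _ = 1 := inv_mul_cancel₀ (by positivity)
  intro h
  rw [← sub_eq_zero.1 h, norm_one] at hsum
  exact lt_irrefl 1 hsum

theorem Multiset.norm_esymm_le {R : Type*} [SeminormedCommRing R] [NormMulClass R]
    [NormOneClass R] {s : Multiset R} {ρ : ℝ} (hs : ∀ w ∈ s, ‖w‖ ≤ ρ) (k : ℕ) :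
    ‖s.esymm k‖ ≤ (Multiset.card s).choose k * ρ ^ k := by
  have hprod : ∀ t ∈ s.powersetCard k, ‖t.prod‖ ≤ ρ ^ k := by
    intro t ht
    obtain ⟨hts, rfl⟩ := Multiset.mem_powersetCard.1 ht
    calc ‖t.prod‖ = (t.map normHom).prod := map_multiset_prod normHom t
      _ ≤ ρ ^ Multiset.card t := Multiset.prod_map_le_pow_card (fun w _ => norm_nonneg w)
          fun w hw => hs w (Multiset.mem_of_le hts hw)
  calc ‖s.esymm k‖ ≤ ((s.powersetCard k).map fun t => ‖t.prod‖).sum := by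
        simpa [Multiset.esymm, Multiset.map_map] using
          norm_multiset_sum_le ((s.powersetCard k).map Multiset.prod)
    _ ≤ ((s.powersetCard k).map fun _ => ρ ^ k).sum := Multiset.sum_map_le_sum_map _ _ hprod
    _ = (Multiset.card s).choose k * ρ ^ k := by simp

theorem Polynomial.Monic.sum_norm_coeff_le {K : Type*} [NormedField K] [IsAlgClosed K]
    {p : K[X]} (hp : p.Monic) {ρ : ℝ} (hroots : ∀ w ∈ p.roots, ‖w‖ ≤ ρ) :
    ∑ k ∈ Finset.range p.natDegree, ‖p.coeff k‖ ≤ (1 + ρ) ^ p.natDegree - 1 := by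
  have hcoeff : ∀ k ∈ Finset.range p.natDegree,
      ‖p.coeff k‖ ≤ ρ ^ (p.natDegree - k) * p.natDegree.choose k := by
    intro k hk
    have hk : k ≤ p.natDegree := (Finset.mem_range.1 hk).le
    rw [coeff_eq_esymm_roots_of_card IsAlgClosed.card_roots_eq_natDegree hk, hp.leadingCoeff]
    simpa [IsAlgClosed.card_roots_eq_natDegree, Nat.choose_symm hk, mul_comm] using
      Multiset.norm_esymm_le hroots (p.natDegree - k)
  calc ∑ k ∈ Finset.range p.natDegree, ‖p.coeff k‖
      ≤ ∑ k ∈ Finset.range p.natDegree, ρ ^ (p.natDegree - k) * p.natDegree.choose k :=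
        Finset.sum_le_sum hcoeff
    _ = (1 + ρ) ^ p.natDegree - 1 := by
        rw [add_pow, Finset.sum_range_succ]
        simp

/-- The reciprocal `z^d θ(1/z)` of the autoregressive polynomial `θ(z) = 1 - ∑_j v_j z^{j+1}`. -/
noncomputable def arReciprocal {d : ℕ} (v : Fin d → ℂ) : ℂ[X] :=
  X ^ d - ∑ i : Fin d, C (v i.rev) * X ^ (i : ℕ)

section arReciprocal

variable {d : ℕ} (v : Fin d → ℂ)

theorem arReciprocal_monic : (arReciprocal v).Monic :=
  monic_X_pow_sub (degree_sum_fin_lt _)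

theorem natDegree_arReciprocal : (arReciprocal v).natDegree = d :=
  natDegree_eq_of_degree_eq_some <|
    (degree_sub_eq_left_of_degree_lt (by rw [degree_X_pow]; exact degree_sum_fin_lt _)).trans
      (degree_X_pow d)

theorem coeff_arReciprocal (i : Fin d) : (arReciprocal v).coeff i = -v i.rev := by
  simp [arReciprocal, coeff_X_pow, finsetSum_coeff, coeff_C_mul, i.isLt.ne, Fin.val_inj]

theorem eval_arReciprocal {w : ℂ} (hw : w ≠ 0) :
    (arReciprocal v).eval w = w ^ d * (1 - ∑ j, v j * w⁻¹ ^ ((j : ℕ) + 1)) := by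
  have hpow : ∀ j : Fin d, w ^ d * w⁻¹ ^ ((j : ℕ) + 1) = w ^ (j.rev : ℕ) := by
    intro j
    rw [Fin.val_rev, pow_sub₀ w hw (by omega), inv_pow]
  simp only [arReciprocal, eval_sub, eval_pow, eval_X, eval_finsetSum, eval_mul, eval_C, mul_sub,
    mul_one, Finset.mul_sum, mul_left_comm (w ^ d), hpow]
  congr 1
  exact Fintype.sum_equiv Fin.revPerm _ _ fun i => by simp

theorem norm_le_of_mem_roots_arReciprocal {ρ : ℝ} (hρ : 0 < ρ)
    (h : ∀ z : ℂ, ‖z‖ < ρ⁻¹ → 1 - ∑ j, v j * z ^ ((j : ℕ) + 1) ≠ 0)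
    {w : ℂ} (hw : w ∈ (arReciprocal v).roots) : ‖w‖ ≤ ρ := by
  rcases eq_or_ne w 0 with rfl | hw0
  · simpa using hρ.le
  have hroot : w ^ d * (1 - ∑ j, v j * w⁻¹ ^ ((j : ℕ) + 1)) = 0 := by
    rw [← eval_arReciprocal v hw0]
    exact (mem_roots (arReciprocal_monic v).ne_zero).1 hw
  have hfar : ρ⁻¹ ≤ ‖w⁻¹‖ :=
    not_lt.1 fun hlt => h _ hlt ((mul_eq_zero.1 hroot).resolve_left (pow_ne_zero _ hw0))
  rwa [norm_inv, inv_le_inv₀ hρ (norm_pos_iff.2 hw0)] at hfar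

end arReciprocal

theorem sum_abs_le_of_one_sub_sum_ne_zero {d : ℕ} (x : Fin d → ℝ) {ρ : ℝ} (hρ : 0 < ρ)
    (h : ∀ z : ℂ, ‖z‖ < ρ⁻¹ → 1 - ∑ j, (x j : ℂ) * z ^ ((j : ℕ) + 1) ≠ 0) :
    ∑ j, |x j| ≤ (1 + ρ) ^ d - 1 := by
  set v : Fin d → ℂ := fun j => x j
  have hcoeff := (arReciprocal_monic v).sum_norm_coeff_le
    fun w hw => norm_le_of_mem_roots_arReciprocal v hρ h hw
  rw [natDegree_arReciprocal,
    ← Fin.sum_univ_eq_sum_range fun k => ‖(arReciprocal v).coeff k‖] at hcoeff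
  calc ∑ j, |x j| = ∑ i : Fin d, ‖(arReciprocal v).coeff i‖ :=
        Fintype.sum_equiv Fin.revPerm _ _ fun j => by
          rw [Fin.revPerm_apply, coeff_arReciprocal, Fin.rev_rev, norm_neg, Complex.norm_real,
            Real.norm_eq_abs]
    _ ≤ (1 + ρ) ^ d - 1 := hcoeff

theorem vnorm_le_sum_abs {d : ℕ} (x : Fin d → ℝ) : vnorm x ≤ ∑ i, |x i| := by
  have hsq : ∑ i, x i ^ 2 ≤ (∑ i, |x i|) ^ 2 := by
    simpa [sq_abs] using
      Finset.sum_sq_le_sq_sum_of_nonneg (s := Finset.univ) fun i _ => abs_nonneg (x i)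
  exact (Real.sqrt_le_left (by positivity)).2 hsq

theorem statement0_general (d : ℕ) (ρ : ℝ) (hρ : 0 < ρ) :
    (∀ θ : ℝ → Fin d → ℝ,
        (∀ t ∈ Set.Icc (0:ℝ) 1,
          vnorm (θ t) ≤ (Real.sqrt (∑ i ∈ Finset.range d, (ρ ^ (2 * (i + 1)))⁻¹))⁻¹) →
        θ ∈ srho d ρ) ∧
    (∀ θ : ℝ → Fin d → ℝ, θ ∈ srho d ρ →
        ∀ t ∈ Set.Icc (0:ℝ) 1, vnorm (θ t) ≤ (1 + ρ) ^ d - 1) :=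
  ⟨fun θ hθ t ht _ hz => one_sub_sum_ne_zero_of_vnorm_le (θ t) (hθ t ht) hz,
    fun θ hθ t ht => (vnorm_le_sum_abs (θ t)).trans
      (sum_abs_le_of_one_sub_sum_ne_zero (θ t) hρ (hθ t ht))⟩

/-- **Lemma 1.** For `ρ > 0`: (i) the sup-norm ball of radius
`(∑_{i=1}^d ρ^{-2i})^{-1/2}` is contained in `S(ρ)`; (ii) `S(ρ)` is contained in the
sup-norm ball of radius `(1+ρ)^d - 1`. -/
theorem statement0 (d : ℕ) (hd : 1 ≤ d) (ρ : ℝ) (hρ : 0 < ρ) :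
    (∀ θ : ℝ → Fin d → ℝ,
        (∀ t ∈ Set.Icc (0:ℝ) 1,
          vnorm (θ t) ≤ (Real.sqrt (∑ i ∈ Finset.range d, (ρ ^ (2 * (i + 1)))⁻¹))⁻¹) →
        θ ∈ srho d ρ) ∧
    (∀ θ : ℝ → Fin d → ℝ, θ ∈ srho d ρ →
        ∀ t ∈ Set.Icc (0:ℝ) 1, vnorm (θ t) ≤ (1 + ρ) ^ d - 1) :=
  statement0_general d ρ hρ
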